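/- arXiv:1807.02695 — 2 statements merged into one kernel-verified Lean document; each statement's English description precedes it below -/
import Mathlib

section
/- If G is a finite simple graph without isolated vertices, then |γ_LLg(G) − γ'_LLg(G)| ≤ 1. -/
/- Formalization of the domination games from "The variety of domination games".

A game is specified by a legality predicate `legal : List V → V → Prop`, where the list
records the previously played vertices (most recent first).  Players alternate moves;
each move must be legal; the game ends when no legal move exists.  Dominator wants to
minimize, Staller to maximize, the total number of moves.

`canEnd legal k turn h` states that, with history `h` and the player to move given by
`turn` (`true` = Dominator), Dominator can guarantee that at most `k` further moves are
played (against any play of Staller).  The value of the game under optimal play by both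
players is then the least such `k` from the empty history. -/

/-- The closed neighborhood `N[v]` of a vertex. -/
def closedNbhd {V : Type*} (G : SimpleGraph V) (v : V) : Set V :=
  insert v (G.neighborSet v)

/-- `⋃_{u ∈ h} N[u]` : the set of vertices dominated by the moves in `h`. -/
def dominatedBy {V : Type*} (G : SimpleGraph V) (h : List V) : Set V :=
  ⋃ u ∈ h, closedNbhd G u

/-- `⋃_{u ∈ h} N(u)` : the set of vertices totally dominated by the moves in `h`. -/
def totDominatedBy {V : Type*} (G : SimpleGraph V) (h : List V) : Set V :=
  ⋃ u ∈ h, G.neighborSet u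

/-- Legality in the domination game: `N[v] \ ⋃_{j<i} N[v_j] ≠ ∅`. -/
def dgLegal {V : Type*} (G : SimpleGraph V) (h : List V) (v : V) : Prop :=
  (closedNbhd G v \ dominatedBy G h).Nonempty

/-- Legality in the total domination game: `N(v) \ ⋃_{j<i} N(v_j) ≠ ∅`. -/
def tgLegal {V : Type*} (G : SimpleGraph V) (h : List V) (v : V) : Prop :=
  (G.neighborSet v \ totDominatedBy G h).Nonempty

/-- Legality in the Z-domination game on `G|A`: `N(v) \ (A ∪ ⋃_{j<i} N[v_j]) ≠ ∅`. -/
def zLegal {V : Type*} (G : SimpleGraph V) (A : Set V) (h : List V) (v : V) : Prop :=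
  (G.neighborSet v \ (A ∪ dominatedBy G h)).Nonempty

/-- Legality in the LL-domination game on `G|A`: `N[v] \ (A ∪ ⋃_{j<i} N(v_j)) ≠ ∅`. -/
def llLegal {V : Type*} (G : SimpleGraph V) (A : Set V) (h : List V) (v : V) : Prop :=
  (closedNbhd G v \ (A ∪ totDominatedBy G h)).Nonempty

/-- Legality in the L-domination game on `G|A`: as in the LL-game, and moreover no vertex
may be played twice. -/
def lLegal {V : Type*} (G : SimpleGraph V) (A : Set V) (h : List V) (v : V) : Prop :=
  llLegal G A h v ∧ v ∉ h

/-- `canEnd legal k turn h` : with previously played vertices `h` and the player to move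
given by `turn` (`true` = Dominator, `false` = Staller), Dominator has a strategy
guaranteeing that at most `k` further moves are made. -/
def canEnd {V : Type*} (legal : List V → V → Prop) : ℕ → Bool → List V → Prop
  | 0, _, h => ∀ v, ¬ legal h v
  | k+1, true, h => (∀ v, ¬ legal h v) ∨ ∃ v, legal h v ∧ canEnd legal k false (v :: h)
  | k+1, false, h => ∀ v, legal h v → canEnd legal k true (v :: h)

/-- The number of moves in the game with legality predicate `legal` when both players play
optimally (Dominator minimizing, Staller maximizing the number of moves); `dFirst = true`
means Dominator makes the first move. -/
noncomputable def gameVal {V : Type*} (legal : List V → V → Prop) (dFirst : Bool) : ℕ :=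
  sInf {k | canEnd legal k dFirst []}

/-- The game Z-domination number `γ_Zg(G|A)` (Dominator starts). -/
noncomputable def gammaZgA {V : Type*} (G : SimpleGraph V) (A : Set V) : ℕ :=
  gameVal (zLegal G A) true

/-- The Staller-start game Z-domination number `γ'_Zg(G|A)`. -/
noncomputable def gammaZgA' {V : Type*} (G : SimpleGraph V) (A : Set V) : ℕ :=
  gameVal (zLegal G A) false

/-- The game L-domination number `γ_Lg(G|A)` (Dominator starts). -/
noncomputable def gammaLgA {V : Type*} (G : SimpleGraph V) (A : Set V) : ℕ :=
  gameVal (lLegal G A) true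

/-- The Staller-start game L-domination number `γ'_Lg(G|A)`. -/
noncomputable def gammaLgA' {V : Type*} (G : SimpleGraph V) (A : Set V) : ℕ :=
  gameVal (lLegal G A) false

/-- The game LL-domination number `γ_LLg(G|A)` (Dominator starts). -/
noncomputable def gammaLLgA {V : Type*} (G : SimpleGraph V) (A : Set V) : ℕ :=
  gameVal (llLegal G A) true

/-- The Staller-start game LL-domination number `γ'_LLg(G|A)`. -/
noncomputable def gammaLLgA' {V : Type*} (G : SimpleGraph V) (A : Set V) : ℕ :=
  gameVal (llLegal G A) false

/-- The game domination number `γ_g(G)` (Dominator starts). -/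
noncomputable def gammaG {V : Type*} (G : SimpleGraph V) : ℕ :=
  gameVal (dgLegal G) true

/-- The game total domination number `γ_tg(G)` (Dominator starts). -/
noncomputable def gammaTg {V : Type*} (G : SimpleGraph V) : ℕ :=
  gameVal (tgLegal G) true

/-- The game Z-domination number `γ_Zg(G)` (Dominator starts). -/
noncomputable def gammaZg {V : Type*} (G : SimpleGraph V) : ℕ := gammaZgA G ∅

/-- The Staller-start game Z-domination number `γ'_Zg(G)`. -/
noncomputable def gammaZg' {V : Type*} (G : SimpleGraph V) : ℕ := gammaZgA' G ∅

/-- The game L-domination number `γ_Lg(G)` (Dominator starts). -/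
noncomputable def gammaLg {V : Type*} (G : SimpleGraph V) : ℕ := gammaLgA G ∅

/-- The Staller-start game L-domination number `γ'_Lg(G)`. -/
noncomputable def gammaLg' {V : Type*} (G : SimpleGraph V) : ℕ := gammaLgA' G ∅

/-- The game LL-domination number `γ_LLg(G)` (Dominator starts). -/
noncomputable def gammaLLg {V : Type*} (G : SimpleGraph V) : ℕ := gammaLLgA G ∅

/-- The Staller-start game LL-domination number `γ'_LLg(G)`. -/
noncomputable def gammaLLg' {V : Type*} (G : SimpleGraph V) : ℕ := gammaLLgA' G ∅

/-- `G` has no isolated vertices. -/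
def isolateFree {V : Type*} (G : SimpleGraph V) : Prop := ∀ v : V, ∃ u, G.Adj v u

/-- The domination number `γ(G)`. -/
noncomputable def domNum {V : Type*} (G : SimpleGraph V) : ℕ :=
  sInf {k | ∃ S : Finset V, S.card = k ∧ ∀ v : V, ∃ u ∈ S, v ∈ closedNbhd G u}

/-- The total domination number `γ_t(G)`. -/
noncomputable def totDomNum {V : Type*} (G : SimpleGraph V) : ℕ :=
  sInf {k | ∃ S : Finset V, S.card = k ∧ ∀ v : V, ∃ u ∈ S, G.Adj u v}

section LLAux

variable {V : Type*}

lemma totDominatedBy_cons (G : SimpleGraph V) (v : V) (h : List V) :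
    totDominatedBy G (v :: h) = G.neighborSet v ∪ totDominatedBy G h := by
  ext x
  simp only [totDominatedBy, List.mem_cons, Set.mem_iUnion, Set.mem_union, exists_prop]
  constructor
  · rintro ⟨u, (rfl | hu), hx⟩
    · exact Or.inl hx
    · exact Or.inr ⟨u, hu, hx⟩
  · rintro (hx | ⟨u, hu, hx⟩)
    · exact ⟨v, Or.inl rfl, hx⟩
    · exact ⟨u, Or.inr hu, hx⟩

lemma totDominatedBy_nil (G : SimpleGraph V) : totDominatedBy G ([] : List V) = ∅ := by
  simp [totDominatedBy]

lemma totDominatedBy_subset_cons (G : SimpleGraph V) (v : V) (h : List V) :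
    totDominatedBy G h ⊆ totDominatedBy G (v :: h) := by
  rw [totDominatedBy_cons]; exact Set.subset_union_right

lemma llLegal_mono {G : SimpleGraph V} {A A' : Set V} {h h' : List V}
    (hs : A ∪ totDominatedBy G h ⊆ A' ∪ totDominatedBy G h') {v : V} :
    llLegal G A' h' v → llLegal G A h v := by
  rintro ⟨x, hx1, hx2⟩
  exact ⟨x, hx1, fun hx => hx2 (hs hx)⟩

lemma union_cons_subset {G : SimpleGraph V} {A A' : Set V} {h h' : List V}
    (hs : A ∪ totDominatedBy G h ⊆ A' ∪ totDominatedBy G h') (v : V) :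
    A ∪ totDominatedBy G (v :: h) ⊆ A' ∪ totDominatedBy G (v :: h') := by
  rw [totDominatedBy_cons, totDominatedBy_cons]
  intro x hx
  rcases hx with hx | hx | hx
  · rcases hs (Or.inl hx) with h | h
    exacts [Or.inl h, Or.inr (Or.inr h)]
  · exact Or.inr (Or.inl hx)
  · rcases hs (Or.inr hx) with h | h
    exacts [Or.inl h, Or.inr (Or.inr h)]

lemma union_self_cons_subset (G : SimpleGraph V) (A : Set V) (h : List V) (v : V) :
    A ∪ totDominatedBy G h ⊆ A ∪ totDominatedBy G (v :: h) := by
  rw [totDominatedBy_cons]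
  intro x hx
  rcases hx with hx | hx
  · exact Or.inl hx
  · exact Or.inr (Or.inr hx)

/-- Continuation principle for the LL-game. -/
lemma ll_canEnd_mono (G : SimpleGraph V) :
    ∀ k (t : Bool) (A A' : Set V) (h h' : List V),
      A ∪ totDominatedBy G h ⊆ A' ∪ totDominatedBy G h' →
      canEnd (llLegal G A) k t h → canEnd (llLegal G A') k t h' := by
  intro k
  induction k using Nat.strong_induction_on with
  | _ k IH =>
    intro t A A' h h' hs hc
    match k, t with
    | 0, t =>
      intro v hv
      exact hc v (llLegal_mono hs hv)
    | k + 1, false =>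
      intro v hv'
      exact IH k (Nat.lt_succ_self k) true A A' (v :: h) (v :: h')
        (union_cons_subset hs v) (hc v (llLegal_mono hs hv'))
    | k + 1, true =>
      rcases hc with hall | ⟨v, hv, hc⟩
      · exact Or.inl (fun v hv' => hall v (llLegal_mono hs hv'))
      · by_cases hv' : llLegal G A' h' v
        · exact Or.inr ⟨v, hv', IH k (Nat.lt_succ_self k) false A A' (v :: h) (v :: h')
            (union_cons_subset hs v) hc⟩
        · have hvsub : closedNbhd G v ⊆ A' ∪ totDominatedBy G h' := by
            rw [← Set.diff_eq_empty]
            exact Set.not_nonempty_iff_eq_empty.mp hv'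
          have hsubv : A ∪ totDominatedBy G (v :: h) ⊆ A' ∪ totDominatedBy G h' := by
            rw [totDominatedBy_cons]
            intro x hx
            rcases hx with hx | hx | hx
            · exact hs (Or.inl hx)
            · exact hvsub (Or.inr hx)
            · exact hs (Or.inr hx)
          have hC : canEnd (llLegal G A') k false h' :=
            IH k (Nat.lt_succ_self k) false A A' (v :: h) h' hsubv hc
          match k, hC with
          | 0, hC => exact Or.inl hC
          | m + 1, hC =>
            by_cases hex : ∃ w, llLegal G A' h' w
            · obtain ⟨w, hw⟩ := hex
              refine Or.inr ⟨w, hw, ?_⟩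
              intro u hu
              exact IH m (by omega) true A' A' (w :: h') (u :: w :: h')
                (union_self_cons_subset G A' (w :: h') u) (hC w hw)
            · exact Or.inl (fun w hw => hex ⟨w, hw⟩)

/-- If a legal move exists in the LL-game on an isolate-free graph, there is a legal move
strictly enlarging the totally dominated set. -/
lemma ll_exists_good_move {G : SimpleGraph V} (hG : isolateFree G) {h : List V} {v : V}
    (hv : llLegal G ∅ h v) :
    ∃ w, llLegal G ∅ h w ∧
      ∃ x, x ∈ totDominatedBy G (w :: h) ∧ x ∉ totDominatedBy G h := by
  obtain ⟨x, hx1, hx2⟩ := hv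
  simp only [Set.mem_union, Set.mem_empty_iff_false, false_or] at hx2
  rcases hx1 with hx1 | hx1
  · -- x = v : v itself is undominated; play a neighbor of v
    subst hx1
    obtain ⟨u, hu⟩ := hG x
    refine ⟨u, ⟨x, Or.inr (hu.symm), ?_⟩, x, ?_, hx2⟩
    · simp only [Set.mem_union, Set.mem_empty_iff_false, false_or]
      exact hx2
    · rw [totDominatedBy_cons]
      exact Or.inl hu.symm
  · -- x ∈ N(v) : playing v totally dominates x
    refine ⟨v, ⟨x, Or.inr hx1, ?_⟩, x, ?_, hx2⟩
    · simp only [Set.mem_union, Set.mem_empty_iff_false, false_or]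
      exact hx2
    · rw [totDominatedBy_cons]
      exact Or.inl hx1

/-- Dominator can always finish the LL-game in a bounded number of moves. -/
lemma ll_canEnd_exists (G : SimpleGraph V) [Fintype V] (hG : isolateFree G) :
    ∀ n : ℕ, (∀ h : List V, (Set.univ \ totDominatedBy G h).ncard ≤ n →
        canEnd (llLegal G ∅) (2 * n) true h) ∧
      (∀ h : List V, (Set.univ \ totDominatedBy G h).ncard ≤ n →
        canEnd (llLegal G ∅) (2 * n + 1) false h) := by
  intro n
  induction n with
  | zero =>
    have key : ∀ h : List V, (Set.univ \ totDominatedBy G h).ncard ≤ 0 →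
        ∀ v, ¬ llLegal G ∅ h v := by
      intro h hh v hv
      obtain ⟨x, _, hx2⟩ := hv
      simp only [Set.mem_union, Set.mem_empty_iff_false, false_or] at hx2
      have hfin : (Set.univ \ totDominatedBy G h).Finite := Set.toFinite _
      have : (Set.univ \ totDominatedBy G h) = ∅ := by
        rw [← Set.ncard_eq_zero hfin]
        omega
      exact absurd this (Set.nonempty_iff_ne_empty.mp ⟨x, Set.mem_univ x, hx2⟩)
    constructor
    · intro h hh
      exact key h hh
    · intro h hh v hv
      exact absurd hv (key h hh v)
  | succ n IH =>
    have htrue : ∀ h : List V, (Set.univ \ totDominatedBy G h).ncard ≤ n + 1 →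
        canEnd (llLegal G ∅) (2 * (n + 1)) true h := by
      intro h hh
      by_cases hex : ∃ v, llLegal G ∅ h v
      · obtain ⟨v, hv⟩ := hex
        obtain ⟨w, hw, x, hx1, hx2⟩ := ll_exists_good_move hG hv
        have hlt : (Set.univ \ totDominatedBy G (w :: h)).ncard <
            (Set.univ \ totDominatedBy G h).ncard := by
          apply Set.ncard_lt_ncard _ (Set.toFinite _)
          constructor
          · intro y hy
            exact ⟨hy.1, fun hc => hy.2 (totDominatedBy_subset_cons G w h hc)⟩
          · intro hsub
            exact (hsub ⟨Set.mem_univ x, hx2⟩).2 hx1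
        have hle : (Set.univ \ totDominatedBy G (w :: h)).ncard ≤ n := by omega
        have : canEnd (llLegal G ∅) (2 * n + 1) false (w :: h) := IH.2 (w :: h) hle
        have he : 2 * (n + 1) = (2 * n + 1) + 1 := by ring
        rw [he]
        exact Or.inr ⟨w, hw, this⟩
      · exact Or.inl (fun v hv => hex ⟨v, hv⟩)
    refine ⟨htrue, ?_⟩
    intro h hh v hv
    have hle : (Set.univ \ totDominatedBy G (v :: h)).ncard ≤ n + 1 := by
      refine le_trans (Set.ncard_le_ncard ?_ (Set.toFinite _)) hh
      intro y hy
      exact ⟨hy.1, fun hc => hy.2 (totDominatedBy_subset_cons G v h hc)⟩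
    exact htrue (v :: h) hle

end LLAux

/-- The Dominator-start and Staller-start game LL-domination numbers differ by at most one. -/
theorem ll_game_D_S_diff_le_one {V : Type*} [Fintype V] (G : SimpleGraph V)
    (hG : isolateFree G) :
    |(gammaLLg G : ℤ) - (gammaLLg' G : ℤ)| ≤ 1 := by
  classical
  set L := llLegal G (∅ : Set V) with hL
  set n0 := (Set.univ \ totDominatedBy G ([] : List V)).ncard with hn0
  have hT : canEnd L (2 * n0) true [] := (ll_canEnd_exists G hG n0).1 [] le_rfl
  have hF : canEnd L (2 * n0 + 1) false [] := (ll_canEnd_exists G hG n0).2 [] le_rfl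
  have hTne : {k | canEnd L k true []}.Nonempty := ⟨2 * n0, hT⟩
  have hFne : {k | canEnd L k false []}.Nonempty := ⟨2 * n0 + 1, hF⟩
  have hgT : canEnd L (gammaLLg G) true [] := by
    have := Nat.sInf_mem hTne
    exact this
  have hgF : canEnd L (gammaLLg' G) false [] := by
    have := Nat.sInf_mem hFne
    exact this
  -- γ' ≤ γ + 1
  have h1 : gammaLLg' G ≤ gammaLLg G + 1 := by
    apply Nat.sInf_le
    show canEnd L (gammaLLg G + 1) false []
    intro v hv
    exact ll_canEnd_mono G (gammaLLg G) true ∅ ∅ [] [v]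
      (union_self_cons_subset G ∅ [] v) hgT
  -- γ ≤ γ' + 1
  have h2 : gammaLLg G ≤ gammaLLg' G + 1 := by
    apply Nat.sInf_le
    show canEnd L (gammaLLg' G + 1) true []
    match hm : gammaLLg' G, hgF with
    | 0, hgF => exact Or.inl hgF
    | m + 1, hgF =>
      by_cases hex : ∃ v, L [] v
      · obtain ⟨v, hv⟩ := hex
        refine Or.inr ⟨v, hv, ?_⟩
        intro u hu
        exact ll_canEnd_mono G m true ∅ ∅ [v] [u, v]
          (union_self_cons_subset G ∅ [v] u) (hgF v hv)
      · exact Or.inl (fun v hv => hex ⟨v, hv⟩)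
  rw [abs_sub_le_iff]
  omega
end

section
/- If G is a finite simple graph without isolated vertices, then γ(G) ≤ γ_Zg(G) ≤ 2γ(G) − 1. -/
/-! A play in which no legal move remains dominates `G`: an undominated vertex would make any
of its neighbours a legal move. This gives `γ(G) ≤ γ_Zg(G)`.

For the upper bound fix a minimum dominating set `D` and call `u ∈ D` finished once `N[u]` is
dominated. While the game is running some `u ∈ D` is unfinished, and Dominator finishes it in
one move: play `u` if `N(u)` still has an undominated vertex, and otherwise play a neighbour of
`u` (then `u` itself is the only undominated vertex of `N[u]`). Staller never unfinishes a
vertex, so Dominator's `|D|`-th move at the latest ends the game, after at most `2|D| - 1` moves. -/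

open Finset

section Game

variable {V : Type*} {legal : List V → V → Prop}

lemma exists_terminal_of_canEnd : ∀ {k : ℕ} {turn : Bool} {h : List V},
    canEnd legal k turn h → ∃ h' : List V, (∀ v, ¬ legal h' v) ∧ h'.length ≤ h.length + k
  | 0, _, h, hc => ⟨h, hc, by omega⟩
  | k + 1, true, h, hc => by
    rcases hc with hend | ⟨v, -, hc⟩
    · exact ⟨h, hend, by omega⟩
    · obtain ⟨h', hend, hlen⟩ := exists_terminal_of_canEnd hc
      exact ⟨h', hend, by simp only [List.length_cons] at hlen; omega⟩
  | k + 1, false, h, hc => by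
    by_cases hmove : ∃ v, legal h v
    · obtain ⟨v, hv⟩ := hmove
      obtain ⟨h', hend, hlen⟩ := exists_terminal_of_canEnd (hc v hv)
      exact ⟨h', hend, by simp only [List.length_cons] at hlen; omega⟩
    · exact ⟨h, fun v hv => hmove ⟨v, hv⟩, by omega⟩

lemma gameVal_le_of_canEnd {k : ℕ} {dFirst : Bool} (hk : canEnd legal k dFirst []) :
    gameVal legal dFirst ≤ k :=
  Nat.sInf_le hk

lemma exists_terminal_length_le_gameVal {k : ℕ} {dFirst : Bool}
    (hk : canEnd legal k dFirst []) :
    ∃ h : List V, (∀ v, ¬ legal h v) ∧ h.length ≤ gameVal legal dFirst := by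
  have hval : canEnd legal (gameVal legal dFirst) dFirst [] :=
    Nat.sInf_mem (s := {k | canEnd legal k dFirst []}) ⟨k, hk⟩
  obtain ⟨h, hend, hlen⟩ := exists_terminal_of_canEnd hval
  exact ⟨h, hend, by simpa using hlen⟩

theorem canEnd_of_potential (φ : List V → ℕ) (n : ℕ)
    (mono : ∀ h v, legal h v → φ h ≤ φ (v :: h))
    (progress : ∀ h v, legal h v → ∃ w, legal h w ∧ φ h < φ (w :: h))
    (terminal : ∀ h, n ≤ φ h → ∀ v, ¬ legal h v) (m : ℕ) :
    ∀ h, n ≤ φ h + m → canEnd legal (2 * m - 1) true h ∧ canEnd legal (2 * m) false h := by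
  induction m with
  | zero => exact fun h hh => ⟨terminal h hh, terminal h hh⟩
  | succ m ih =>
    have dominator_turn : ∀ h, n ≤ φ h + (m + 1) → canEnd legal (2 * m + 1) true h := by
      intro h hh
      by_cases hmove : ∃ v, legal h v
      · obtain ⟨v, hv⟩ := hmove
        obtain ⟨w, hw, hφ⟩ := progress h v hv
        exact Or.inr ⟨w, hw, (ih (w :: h) (by omega)).2⟩
      · exact Or.inl fun v hv => hmove ⟨v, hv⟩
    intro h hh
    rw [show 2 * (m + 1) - 1 = 2 * m + 1 by omega, show 2 * (m + 1) = 2 * m + 1 + 1 by omega]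
    exact ⟨dominator_turn h hh,
      fun v hv => dominator_turn (v :: h) (by have := mono h v hv; omega)⟩

end Game

def IsDominating {V : Type*} (G : SimpleGraph V) (S : Finset V) : Prop :=
  ∀ v, ∃ u ∈ S, v ∈ closedNbhd G u

open scoped Classical in
noncomputable def finishedIn {V : Type*} (G : SimpleGraph V) (D : Finset V) (h : List V) :
    Finset V :=
  {u ∈ D | closedNbhd G u ⊆ dominatedBy G h}

section ZGame

variable {V : Type*} (G : SimpleGraph V)

lemma domNum_le_card {S : Finset V} (hS : IsDominating G S) : domNum G ≤ #S :=
  Nat.sInf_le ⟨S, rfl, hS⟩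

lemma exists_isDominating_card_eq_domNum [Fintype V] :
    ∃ S : Finset V, IsDominating G S ∧ #S = domNum G := by
  have huniv : IsDominating G univ := fun v => ⟨v, mem_univ v, Set.mem_insert v _⟩
  obtain ⟨S, hcard, hS⟩ :=
    Nat.sInf_mem (s := {k | ∃ S : Finset V, #S = k ∧ IsDominating G S})
      ⟨_, univ, rfl, huniv⟩
  exact ⟨S, hS, hcard⟩

lemma dominatedBy_cons (v : V) (h : List V) :
    dominatedBy G (v :: h) = closedNbhd G v ∪ dominatedBy G h := by
  ext
  simp [dominatedBy]

lemma zLegal_empty_iff {h : List V} {v : V} :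
    zLegal G ∅ h v ↔ (G.neighborSet v \ dominatedBy G h).Nonempty := by
  simp [zLegal]

lemma isDominating_toFinset_of_dominatedBy_eq_univ [DecidableEq V] {h : List V}
    (hh : dominatedBy G h = Set.univ) : IsDominating G h.toFinset := by
  intro v
  have hv : v ∈ dominatedBy G h := hh ▸ Set.mem_univ v
  simp only [dominatedBy, Set.mem_iUnion, exists_prop] at hv
  simpa using hv

lemma forall_not_zLegal_iff (hG : isolateFree G) {h : List V} :
    (∀ v, ¬ zLegal G ∅ h v) ↔ dominatedBy G h = Set.univ := by
  simp only [zLegal_empty_iff]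
  constructor
  · intro hend
    refine Set.eq_univ_of_forall fun v => by_contra fun hv => ?_
    obtain ⟨x, hvx⟩ := hG v
    exact hend x ⟨v, hvx.symm, hv⟩
  · intro hh v
    simp [hh]

lemma exists_zLegal_finishing (hG : isolateFree G) {h : List V} {u : V}
    (hu : ¬ closedNbhd G u ⊆ dominatedBy G h) :
    ∃ v, zLegal G ∅ h v ∧ closedNbhd G u ⊆ dominatedBy G (v :: h) := by
  simp only [zLegal_empty_iff, dominatedBy_cons]
  by_cases hN : (G.neighborSet u \ dominatedBy G h).Nonempty
  · exact ⟨u, hN, Set.subset_union_left⟩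
  · have hNu : G.neighborSet u ⊆ dominatedBy G h := fun y hy =>
      by_contra fun hy' => hN ⟨y, hy, hy'⟩
    have hu_undom : u ∉ dominatedBy G h := fun hu' => hu (Set.insert_subset hu' hNu)
    obtain ⟨x, hux⟩ := hG u
    refine ⟨x, ⟨u, hux.symm, hu_undom⟩, Set.insert_subset (Or.inl (Or.inr hux.symm)) ?_⟩
    exact hNu.trans Set.subset_union_right

lemma mem_finishedIn {D : Finset V} {h : List V} {u : V} :
    u ∈ finishedIn G D h ↔ u ∈ D ∧ closedNbhd G u ⊆ dominatedBy G h := by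
  simp [finishedIn]

lemma finishedIn_subset_cons (D : Finset V) (v : V) (h : List V) :
    finishedIn G D h ⊆ finishedIn G D (v :: h) := by
  intro u hu
  rw [mem_finishedIn, dominatedBy_cons] at *
  exact ⟨hu.1, hu.2.trans Set.subset_union_right⟩

lemma dominatedBy_eq_univ_of_card_finishedIn {D : Finset V} (hD : IsDominating G D) {h : List V}
    (hfin : #D ≤ #(finishedIn G D h)) : dominatedBy G h = Set.univ := by
  have hall : finishedIn G D h = D :=
    eq_of_subset_of_card_le (fun u hu => ((mem_finishedIn G).1 hu).1) hfin
  refine Set.eq_univ_of_forall fun v => ?_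
  obtain ⟨u, huD, hvu⟩ := hD v
  rw [← hall] at huD
  exact ((mem_finishedIn G).1 huD).2 hvu

lemma exists_zLegal_card_finishedIn_lt (hG : isolateFree G) {D : Finset V}
    (hD : IsDominating G D) {h : List V} {v : V} (hv : zLegal G ∅ h v) :
    ∃ w, zLegal G ∅ h w ∧ #(finishedIn G D h) < #(finishedIn G D (w :: h)) := by
  obtain ⟨x, -, hx⟩ := (zLegal_empty_iff G).1 hv
  obtain ⟨u, huD, hxu⟩ := hD x
  have hu : ¬ closedNbhd G u ⊆ dominatedBy G h := fun hu => hx (hu hxu)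
  obtain ⟨w, hw, hfin⟩ := exists_zLegal_finishing G hG hu
  refine ⟨w, hw, card_lt_card <|
    (ssubset_iff_of_subset (finishedIn_subset_cons G D w h)).2 ⟨u, ?_, ?_⟩⟩
  · exact (mem_finishedIn G).2 ⟨huD, hfin⟩
  · exact fun hu' => hu ((mem_finishedIn G).1 hu').2

theorem canEnd_zLegal_of_isDominating (hG : isolateFree G) {D : Finset V}
    (hD : IsDominating G D) : canEnd (zLegal G ∅) (2 * #D - 1) true [] :=
  (canEnd_of_potential (fun h => #(finishedIn G D h)) #D
    (fun h v _ => card_le_card (finishedIn_subset_cons G D v h))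
    (fun _ _ hv => exists_zLegal_card_finishedIn_lt G hG hD hv)
    (fun _ hfin =>
      (forall_not_zLegal_iff G hG).2 (dominatedBy_eq_univ_of_card_finishedIn G hD hfin))
    #D [] (by omega)).1

end ZGame

/-- `γ(G) ≤ γ_Zg(G) ≤ 2γ(G) − 1`. -/
theorem gammaZg_bounds {V : Type*} [Fintype V] (G : SimpleGraph V)
    (hG : isolateFree G) :
    domNum G ≤ gammaZg G ∧ gammaZg G ≤ 2 * domNum G - 1 := by
  classical
  obtain ⟨D, hD, hcard⟩ := exists_isDominating_card_eq_domNum G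
  have hplay := canEnd_zLegal_of_isDominating G hG hD
  refine ⟨?_, hcard ▸ gameVal_le_of_canEnd hplay⟩
  obtain ⟨h, hend, hlen⟩ := exists_terminal_length_le_gameVal hplay
  calc domNum G ≤ #h.toFinset :=
        domNum_le_card G (isDominating_toFinset_of_dominatedBy_eq_univ G
          ((forall_not_zLegal_iff G hG).1 hend))
    _ ≤ h.length := List.toFinset_card_le h
    _ ≤ gammaZg G := hlen
end
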